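/- Let L_j, L_i : ℝ → ℝ be C² with second derivatives ≥ γ > 0, let c ∈ ℝ, and for fixed y > 0, x > 0 define e(τ) = τ·L_j(−y/τ) + (1−τ)·L_i(x/(1−τ)) for τ ∈ (0,1). Then e is strictly convex on (0,1), with e''(τ) = (y²/τ³)·L_j''(−y/τ) + (x²/(1−τ)³)·L_i''(x/(1−τ)) > 0, and e(τ) → +∞ as τ → 0⁺ and as τ → 1⁻; hence e attains a unique minimum at some τ* ∈ (0,1). -/

import Mathlib

open Set Filter Topology

/-!
The second derivative of the perspective `t ↦ t L(a/t)` is `(a²/t³) L''(a/t)`, which gives the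
formula for `e''`, its positivity and hence strict convexity. Since `L'' ≥ γ`, `L` lies above the
parabola `L 0 + L'(0) ξ + γ ξ²/2`, so `t L(a/t) ≥ γ a²/(2t) + O(1)` blows up as `t → 0⁺` when
`a ≠ 0`. Thus `e → +∞` at both ends of `(0,1)`; a continuous function with this property attains
its infimum, and strict convexity makes the minimiser unique.
-/

lemma ConvexOn.add_deriv_mul_sub_le {S : Set ℝ} {f : ℝ → ℝ} {x y : ℝ} (hf : ConvexOn ℝ S f)
    (hx : x ∈ S) (hy : y ∈ S) (hfx : DifferentiableAt ℝ f x) :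
    f x + deriv f x * (y - x) ≤ f y := by
  rcases lt_trichotomy y x with hyx | rfl | hxy
  · have := hf.slope_le_of_hasDerivAt hy hx hyx hfx.hasDerivAt
    rw [slope_def_field, div_le_iff₀ (sub_pos.2 hyx)] at this
    linarith
  · simp
  · have := hf.le_slope_of_hasDerivAt hx hy hxy hfx.hasDerivAt
    rw [slope_def_field, le_div_iff₀ (sub_pos.2 hxy)] at this
    linarith

lemma iteratedDeriv_two_eq_deriv_deriv (f : ℝ → ℝ) : iteratedDeriv 2 f = deriv (deriv f) := by
  rw [iteratedDeriv_succ, iteratedDeriv_one]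

lemma ContDiff.differentiable_deriv {f : ℝ → ℝ} (hf : ContDiff ℝ 2 f) :
    Differentiable ℝ (deriv f) := by
  simpa using hf.differentiable_iteratedDeriv 1 (by norm_num)

lemma add_deriv_mul_add_sq_le_of_le_iteratedDeriv_two {L : ℝ → ℝ} {γ : ℝ} (hL : ContDiff ℝ 2 L)
    (hL'' : ∀ ξ, γ ≤ iteratedDeriv 2 L ξ) (x y : ℝ) :
    L x + deriv L x * (y - x) + γ / 2 * (y - x) ^ 2 ≤ L y := by
  set h : ℝ → ℝ := fun t => L t - γ / 2 * (t - x) ^ 2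
  have hh' : ∀ t, HasDerivAt h (deriv L t - γ * (t - x)) t := fun t => by
    have hq := ((hasDerivAt_id t).sub_const x).pow 2 |>.const_mul (γ / 2)
    exact ((hL.differentiable two_ne_zero t).hasDerivAt.sub hq).congr_deriv (by simp; ring)
  have hderiv : deriv h = fun t => deriv L t - γ * (t - x) := funext fun t => (hh' t).deriv
  have hh'' : ∀ t, HasDerivAt (deriv h) (iteratedDeriv 2 L t - γ) t := fun t => by
    rw [hderiv, iteratedDeriv_two_eq_deriv_deriv]
    exact ((hL.differentiable_deriv t).hasDerivAt.sub
      (((hasDerivAt_id t).sub_const x).const_mul γ)).congr_deriv (by simp)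
  have hconv : ConvexOn ℝ univ h := by
    refine convexOn_univ_of_deriv2_nonneg (fun t => (hh' t).differentiableAt)
      (fun t => (hh'' t).differentiableAt) fun t => ?_
    rw [← iteratedDeriv_eq_iterate, iteratedDeriv_two_eq_deriv_deriv, (hh'' t).deriv]
    linarith [hL'' t]
  have := hconv.add_deriv_mul_sub_le (mem_univ x) (mem_univ y) (hh' x).differentiableAt
  simp only [hderiv, h, sub_self] at this
  linarith

lemma iteratedDeriv_two_eq_of_hasDerivAt {f f' : ℝ → ℝ} {x f'' : ℝ}
    (hf : ∀ᶠ t in 𝓝 x, HasDerivAt f (f' t) t) (hf' : HasDerivAt f' f'' x) :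
    iteratedDeriv 2 f x = f'' := by
  have hderiv : deriv f =ᶠ[𝓝 x] f' := hf.mono fun t ht => ht.deriv
  rw [iteratedDeriv_two_eq_deriv_deriv, hderiv.deriv_eq, hf'.deriv]

lemma exists_isMinOn_Ioo_of_tendsto_atTop {α β : Type*} [ConditionallyCompleteLinearOrder α]
    [TopologicalSpace α] [OrderTopology α] [DenselyOrdered α] [LinearOrder β]
    [TopologicalSpace β] [ClosedIicTopology β] [NoMaxOrder β] {f : α → β} {a b : α} (hab : a < b)
    (hf : ContinuousOn f (Ioo a b)) (ha : Tendsto f (𝓝[>] a) atTop)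
    (hb : Tendsto f (𝓝[<] b) atTop) : ∃ c ∈ Ioo a b, IsMinOn f (Ioo a b) c := by
  obtain ⟨m, ham, hmb⟩ := exists_between hab
  obtain ⟨u, hu, hau⟩ :=
    (mem_nhdsGT_iff_exists_mem_Ioc_Ioo_subset ham).1 (ha.eventually_gt_atTop (f m))
  obtain ⟨v, hv, hvb⟩ :=
    (mem_nhdsLT_iff_exists_mem_Ico_Ioo_subset hmb).1 (hb.eventually_gt_atTop (f m))
  have hK : Icc u v ⊆ Ioo a b := Icc_subset_Ioo hu.1 hv.2
  have hmK : m ∈ Icc u v := ⟨hu.2, hv.1⟩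
  obtain ⟨c, hc, hmin⟩ := isCompact_Icc.exists_isMinOn ⟨m, hmK⟩ (hf.mono hK)
  have hcm : f c ≤ f m := hmin hmK
  refine ⟨c, hK hc, fun t ht => ?_⟩
  rcases lt_or_ge t u with htu | hut
  · exact hcm.trans (hau ⟨ht.1, htu⟩).le
  rcases le_or_gt t v with htv | hvt
  · exact hmin ⟨hut, htv⟩
  · exact hcm.trans (hvb ⟨hvt, ht.2⟩).le

noncomputable def perspective (L : ℝ → ℝ) (a t : ℝ) : ℝ := t * L (a / t)

section Perspective

variable {L M : ℝ → ℝ} {a b t : ℝ}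

lemma hasDerivAt_perspective (hL : DifferentiableAt ℝ L (a / t)) (ht : t ≠ 0) :
    HasDerivAt (perspective L a) (L (a / t) - a / t * deriv L (a / t)) t := by
  have hq : HasDerivAt (fun s => a / s) (-(a / t ^ 2)) t :=
    ((hasDerivAt_inv ht).const_mul a).congr_deriv (by ring)
  refine ((hasDerivAt_id t).mul (hL.hasDerivAt.comp t hq)).congr_deriv ?_
  simp only [Function.comp_apply, id]
  field_simp
  ring

lemma hasDerivAt_perspective_deriv (hL : DifferentiableAt ℝ L (a / t))
    (hL' : DifferentiableAt ℝ (deriv L) (a / t)) (ht : t ≠ 0) :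
    HasDerivAt (fun s => L (a / s) - a / s * deriv L (a / s))
      (a ^ 2 / t ^ 3 * iteratedDeriv 2 L (a / t)) t := by
  have hq : HasDerivAt (fun s => a / s) (-(a / t ^ 2)) t :=
    ((hasDerivAt_inv ht).const_mul a).congr_deriv (by ring)
  refine ((hL.hasDerivAt.comp t hq).sub (hq.mul (hL'.hasDerivAt.comp t hq))).congr_deriv ?_
  simp only [Function.comp_apply, iteratedDeriv_two_eq_deriv_deriv]
  field_simp
  ring

lemma continuousAt_perspective (hL : ContinuousAt L (a / t)) (ht : t ≠ 0) :
    ContinuousAt (perspective L a) t :=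
  continuousAt_id.mul (hL.comp (continuousAt_const.div continuousAt_id ht))

lemma tendsto_perspective_nhdsGT_zero {γ : ℝ} (hL : ContDiff ℝ 2 L) (hγ : 0 < γ)
    (hL'' : ∀ ξ, γ ≤ iteratedDeriv 2 L ξ) (ha : a ≠ 0) :
    Tendsto (perspective L a) (𝓝[>] 0) atTop := by
  have hlower : ∀ s > 0, s * L 0 + deriv L 0 * a + γ / 2 * a ^ 2 * s⁻¹ ≤ perspective L a s := by
    intro s hs
    have := add_deriv_mul_add_sq_le_of_le_iteratedDeriv_two hL hL'' 0 (a / s)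
    calc s * L 0 + deriv L 0 * a + γ / 2 * a ^ 2 * s⁻¹
        = s * (L 0 + deriv L 0 * (a / s - 0) + γ / 2 * (a / s - 0) ^ 2) := by
          field_simp
          ring
      _ ≤ perspective L a s := mul_le_mul_of_nonneg_left this hs.le
  have hbound : Tendsto (fun s => s * L 0 + deriv L 0 * a + γ / 2 * a ^ 2 * s⁻¹) (𝓝[>] 0) atTop := by
    refine Tendsto.add_atTop (C := 0 * L 0 + deriv L 0 * a) ?_
      (tendsto_inv_nhdsGT_zero.const_mul_atTop (by positivity))
    exact ((continuous_id.mul continuous_const).add continuous_const).tendsto' 0 _ rfl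
      |>.mono_left nhdsWithin_le_nhds
  exact tendsto_atTop_mono' _ (eventually_nhdsWithin_of_forall hlower) hbound


lemma hasDerivAt_perspective_add_perspective_one_sub (hL : Differentiable ℝ L)
    (hM : Differentiable ℝ M) (h0 : t ≠ 0) (h1 : t ≠ 1) :
    HasDerivAt (fun s => perspective L a s + perspective M b (1 - s))
      ((L (a / t) - a / t * deriv L (a / t)) -
        (M (b / (1 - t)) - b / (1 - t) * deriv M (b / (1 - t)))) t :=
  (hasDerivAt_perspective (hL _) h0).add
    ((hasDerivAt_perspective (hM _) (sub_ne_zero.2 h1.symm)).comp_const_sub 1 t)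

lemma iteratedDeriv_two_perspective_add_perspective_one_sub (hL : ContDiff ℝ 2 L)
    (hM : ContDiff ℝ 2 M) (h0 : t ≠ 0) (h1 : t ≠ 1) :
    iteratedDeriv 2 (fun s => perspective L a s + perspective M b (1 - s)) t =
      a ^ 2 / t ^ 3 * iteratedDeriv 2 L (a / t) +
        b ^ 2 / (1 - t) ^ 3 * iteratedDeriv 2 M (b / (1 - t)) := by
  have hL1 := hL.differentiable two_ne_zero
  have hM1 := hM.differentiable two_ne_zero
  have hsecond := (hasDerivAt_perspective_deriv (hL1 (a / t)) (hL.differentiable_deriv _) h0).sub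
    ((hasDerivAt_perspective_deriv (hM1 (b / (1 - t))) (hM.differentiable_deriv _)
      (sub_ne_zero.2 h1.symm)).comp_const_sub 1 t)
  refine iteratedDeriv_two_eq_of_hasDerivAt ?_ (hsecond.congr_deriv (by ring))
  filter_upwards [eventually_ne_nhds h0, eventually_ne_nhds h1] with s hs0 hs1
  exact hasDerivAt_perspective_add_perspective_one_sub hL1 hM1 hs0 hs1

lemma tendsto_perspective_add_perspective_one_sub_nhdsGT_zero {γ : ℝ} (hL : ContDiff ℝ 2 L)
    (hγ : 0 < γ) (hL'' : ∀ ξ, γ ≤ iteratedDeriv 2 L ξ) (ha : a ≠ 0) (hM : Continuous M) :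
    Tendsto (fun s => perspective L a s + perspective M b (1 - s)) (𝓝[>] 0) atTop := by
  have hright : ContinuousAt (fun s => perspective M b (1 - s)) 0 :=
    (continuousAt_perspective hM.continuousAt one_ne_zero).comp_of_eq
      (continuous_sub_left 1).continuousAt (sub_zero 1)
  exact (tendsto_perspective_nhdsGT_zero hL hγ hL'' ha).atTop_add
    (hright.tendsto.mono_left nhdsWithin_le_nhds)

lemma tendsto_perspective_add_perspective_one_sub_nhdsLT_one {γ : ℝ} (hL : Continuous L)
    (hM : ContDiff ℝ 2 M) (hγ : 0 < γ) (hM'' : ∀ ξ, γ ≤ iteratedDeriv 2 M ξ) (hb : b ≠ 0) :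
    Tendsto (fun s => perspective L a s + perspective M b (1 - s)) (𝓝[<] 1) atTop := by
  have hone_sub : Tendsto (fun s : ℝ => 1 - s) (𝓝[<] 1) (𝓝[>] 0) := by
    have := map_subLeft_nhdsLT (c := (1 : ℝ)) (a := 1)
    rw [sub_self] at this
    exact this.le
  exact ((continuousAt_perspective hL.continuousAt one_ne_zero).tendsto.mono_left
    nhdsWithin_le_nhds).add_atTop ((tendsto_perspective_nhdsGT_zero hM hγ hM'' hb).comp hone_sub)

end Perspective


/-- For uniformly convex `Lⱼ, Lᵢ` and fixed `y, x > 0`, the function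
`e(τ) = τ Lⱼ(−y/τ) + (1−τ) Lᵢ(x/(1−τ))` is strictly convex on `(0,1)` with
`e''(τ) = (y²/τ³) Lⱼ''(−y/τ) + (x²/(1−τ)³) Lᵢ''(x/(1−τ)) > 0`, blows up at both
endpoints, and attains a unique minimum on `(0,1)`. -/
theorem e_strictly_convex_unique_min
    (Lj Li : ℝ → ℝ) (γ : ℝ) (hγ : 0 < γ)
    (hLj : ContDiff ℝ 2 Lj) (hLi : ContDiff ℝ 2 Li)
    (hLj'' : ∀ ξ : ℝ, γ ≤ iteratedDeriv 2 Lj ξ)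
    (hLi'' : ∀ ξ : ℝ, γ ≤ iteratedDeriv 2 Li ξ)
    (y x : ℝ) (hy : 0 < y) (hx : 0 < x)
    (e : ℝ → ℝ)
    (he : ∀ τ : ℝ, e τ = τ * Lj (-y / τ) + (1 - τ) * Li (x / (1 - τ))) :
    StrictConvexOn ℝ (Ioo 0 1) e ∧
    (∀ τ ∈ Ioo (0 : ℝ) 1,
      iteratedDeriv 2 e τ =
        y ^ 2 / τ ^ 3 * iteratedDeriv 2 Lj (-y / τ) +
          x ^ 2 / (1 - τ) ^ 3 * iteratedDeriv 2 Li (x / (1 - τ)) ∧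
      0 < iteratedDeriv 2 e τ) ∧
    Tendsto e (nhdsWithin 0 (Ioi 0)) atTop ∧
    Tendsto e (nhdsWithin 1 (Iio 1)) atTop ∧
    (∃! τ : ℝ, τ ∈ Ioo (0 : ℝ) 1 ∧ IsMinOn e (Ioo 0 1) τ) := by
  have he' : e = fun τ => perspective Lj (-y) τ + perspective Li x (1 - τ) := funext he
  have hd2 : ∀ τ ∈ Ioo (0 : ℝ) 1, iteratedDeriv 2 e τ =
      y ^ 2 / τ ^ 3 * iteratedDeriv 2 Lj (-y / τ) +
        x ^ 2 / (1 - τ) ^ 3 * iteratedDeriv 2 Li (x / (1 - τ)) := fun τ hτ => by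
    rw [he', iteratedDeriv_two_perspective_add_perspective_one_sub hLj hLi hτ.1.ne' hτ.2.ne,
      neg_sq]
  have hpos : ∀ τ ∈ Ioo (0 : ℝ) 1, 0 < iteratedDeriv 2 e τ := fun τ hτ => by
    have : 0 < τ := hτ.1
    have : 0 < 1 - τ := sub_pos.2 hτ.2
    rw [hd2 τ hτ]
    exact add_pos (mul_pos (by positivity) (hγ.trans_le (hLj'' _)))
      (mul_pos (by positivity) (hγ.trans_le (hLi'' _)))
  have hcont : ContinuousOn e (Ioo 0 1) := fun τ hτ => by
    rw [he']
    exact (hasDerivAt_perspective_add_perspective_one_sub (hLj.differentiable two_ne_zero)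
      (hLi.differentiable two_ne_zero) hτ.1.ne' hτ.2.ne).continuousAt.continuousWithinAt
  have hconv : StrictConvexOn ℝ (Ioo 0 1) e :=
    strictConvexOn_of_deriv2_pos (convex_Ioo 0 1) hcont fun τ hτ => by
      rw [interior_Ioo] at hτ
      exact iteratedDeriv_eq_iterate (f := e) ▸ hpos τ hτ
  have hlim0 : Tendsto e (𝓝[>] 0) atTop := by
    rw [he']
    exact tendsto_perspective_add_perspective_one_sub_nhdsGT_zero hLj hγ hLj''
      (neg_ne_zero.2 hy.ne') hLi.continuous
  have hlim1 : Tendsto e (𝓝[<] 1) atTop := by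
    rw [he']
    exact tendsto_perspective_add_perspective_one_sub_nhdsLT_one hLj.continuous hLi hγ hLi''
      hx.ne'
  obtain ⟨τ, hτ, hmin⟩ := exists_isMinOn_Ioo_of_tendsto_atTop zero_lt_one hcont hlim0 hlim1
  exact ⟨hconv, fun τ hτ => ⟨hd2 τ hτ, hpos τ hτ⟩, hlim0, hlim1,
    τ, ⟨hτ, hmin⟩, fun σ hσ => hconv.eq_of_isMinOn hσ.2 hmin hσ.1 hτ⟩
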